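/- If p ≥ 3 is odd, q > 2 is even, and p and q are coprime, then the ordinary signature of the torus knot T_{p,q} satisfies σ_ord(T_{p,q}) = −pq/2 + 1 − 4·s(2p,q) + 8·s(p,q). -/

import Mathlib

open scoped Classical

/-- The set Σ(p,q) = {k/p + l/q : 1 ≤ k ≤ p−1, 1 ≤ l ≤ q−1} ⊆ ℝ. -/
noncomputable def sigmaSet (p q : ℕ) : Finset ℝ :=
  ((Finset.Icc 1 (p - 1)) ×ˢ (Finset.Icc 1 (q - 1))).image
    (fun kl => (kl.1 : ℝ) / p + (kl.2 : ℝ) / q)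

/-- Litherland's formula: σ̂(x) = |Σ(p,q) \ (x,x+1)| − |Σ(p,q) ∩ (x,x+1)|. -/
noncomputable def sigHat (p q : ℕ) (x : ℝ) : ℤ :=
  (((sigmaSet p q).filter (fun y => y ∉ Set.Ioo x (x + 1))).card : ℤ)
    - (((sigmaSet p q).filter (fun y => y ∈ Set.Ioo x (x + 1))).card : ℤ)

/-- The sawtooth function ((x)). -/
noncomputable def saw (x : ℝ) : ℝ :=
  if ∃ n : ℤ, x = n then 0 else Int.fract x - 1 / 2

/-- The Dedekind sum s(a,b). -/
noncomputable def dedekindSum (a b : ℕ) : ℝ :=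
  ∑ j ∈ Finset.range b, saw ((j : ℝ) / b) * saw ((a : ℝ) * j / b)

/-- The generalized Dedekind sum s(a,b;x,y). -/
noncomputable def dedekindSumGen (a b : ℕ) (x y : ℝ) : ℝ :=
  ∑ j ∈ Finset.range b, saw (((j : ℝ) + y) / b) * saw ((a : ℝ) * ((j : ℝ) + y) / b + x)

/-- N(p,q;C) = #{(k,l) ∈ ℤ²_{≥0} : k/p + l/q < 1 − C}. -/
noncomputable def Ncount (p q : ℕ) (C : ℝ) : ℕ :=
  Set.ncard {kl : ℕ × ℕ | (kl.1 : ℝ) / p + (kl.2 : ℝ) / q < 1 - C}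

/-- The second Bernoulli polynomial evaluated at the fractional part: Ψ₂(x). -/
noncomputable def psi2 (x : ℝ) : ℝ := Int.fract x ^ 2 - Int.fract x + 1 / 6

lemma exists_int_iff_fract {x : ℝ} : (∃ n : ℤ, x = n) ↔ Int.fract x = 0 := by
  constructor
  · rintro ⟨n, rfl⟩; exact Int.fract_intCast n
  · intro h; exact ⟨⌊x⌋, by rw [← Int.floor_add_fract x, h, add_zero]; simp⟩

lemma saw_def' (x : ℝ) : saw x = if Int.fract x = 0 then 0 else Int.fract x - 1 / 2 := by
  unfold saw
  by_cases h : Int.fract x = 0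
  · rw [if_pos (exists_int_iff_fract.2 h), if_pos h]
  · rw [if_neg (fun hx => h (exists_int_iff_fract.1 hx)), if_neg h]

lemma saw_of_fract_ne {x : ℝ} (h : Int.fract x ≠ 0) : saw x = Int.fract x - 1/2 := by
  rw [saw_def', if_neg h]

lemma saw_of_fract_eq {x : ℝ} (h : Int.fract x = 0) : saw x = 0 := by
  rw [saw_def', if_pos h]

lemma saw_add_int (x : ℝ) (n : ℤ) : saw (x + n) = saw x := by
  rw [saw_def', saw_def', Int.fract_add_intCast]

lemma saw_int_add (x : ℝ) (n : ℤ) : saw ((n : ℝ) + x) = saw x := by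
  rw [add_comm]; exact saw_add_int x n

lemma saw_neg (x : ℝ) : saw (-x) = - saw x := by
  by_cases h : Int.fract x = 0
  · rw [saw_of_fract_eq h, saw_of_fract_eq (Int.fract_neg_eq_zero.2 h), neg_zero]
  · have h2 : Int.fract (-x) = 1 - Int.fract x := Int.fract_neg h
    have h3 : Int.fract (-x) ≠ 0 := fun hc => h (by rw [← Int.fract_neg_eq_zero, neg_neg] at hc; exact hc)
    rw [saw_of_fract_ne h, saw_of_fract_ne h3, h2]; ring

lemma saw_doubling_aux (f : ℝ) (hf0 : 0 ≤ f) (hf1 : f < 1) :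
    saw (2 * f) = saw f + saw (f + 1/2) := by
  have hff : Int.fract f = f := Int.fract_eq_self.2 ⟨hf0, hf1⟩
  rcases eq_or_lt_of_le hf0 with h0 | h0
  · have e0 : Int.fract f = 0 := by rw [hff, ← h0]
    have e1 : Int.fract (2 * f) = 0 := by rw [← h0]; norm_num
    have e2 : Int.fract (f + 1/2) = 1/2 := by
      rw [← h0, zero_add]; exact Int.fract_eq_self.2 ⟨by norm_num, by norm_num⟩
    rw [saw_of_fract_eq e0, saw_of_fract_eq e1, saw_of_fract_ne (by rw [e2]; norm_num), e2]
    norm_num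
  rcases lt_trichotomy f (1/2) with h | h | h
  · have e1 : Int.fract (2*f) = 2*f := Int.fract_eq_self.2 ⟨by linarith, by linarith⟩
    have e2 : Int.fract (f + 1/2) = f + 1/2 := Int.fract_eq_self.2 ⟨by linarith, by linarith⟩
    rw [saw_of_fract_ne (by rw [e1]; positivity), saw_of_fract_ne (by rw [hff]; positivity),
      saw_of_fract_ne (by rw [e2]; positivity), e1, e2, hff]
    ring
  · have e1 : Int.fract (2*f) = 0 := by
      rw [h, show (2:ℝ) * (1/2) = ((1:ℤ):ℝ) by norm_num, Int.fract_intCast]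
    have e2 : Int.fract (f + 1/2) = 0 := by
      rw [h, show (1:ℝ)/2 + 1/2 = ((1:ℤ):ℝ) by norm_num, Int.fract_intCast]
    rw [saw_of_fract_eq e1, saw_of_fract_eq e2, saw_of_fract_ne (by rw [hff, h]; norm_num), hff, h]
    norm_num
  · have e1 : Int.fract (2*f) = 2*f - 1 := by
      rw [show (2:ℝ)*f = ((1:ℤ):ℝ) + (2*f - 1) by push_cast; ring, Int.fract_intCast_add,
        Int.fract_eq_self.2 ⟨by linarith, by linarith⟩]
      push_cast; ring
    have e2 : Int.fract (f + 1/2) = f - 1/2 := by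
      rw [show f + (1:ℝ)/2 = ((1:ℤ):ℝ) + (f - 1/2) by push_cast; ring, Int.fract_intCast_add,
        Int.fract_eq_self.2 ⟨by linarith, by linarith⟩]
    rw [saw_of_fract_ne (by rw [e1]; intro hc; nlinarith), saw_of_fract_ne (by rw [hff]; intro hc; nlinarith),
      saw_of_fract_ne (by rw [e2]; intro hc; nlinarith), e1, e2, hff]
    ring

lemma saw_doubling (x : ℝ) : saw (2 * x) = saw x + saw (x + 1/2) := by
  set f := Int.fract x with hf
  have hx : x = (⌊x⌋ : ℝ) + f := by rw [hf, Int.floor_add_fract]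
  have h1 : saw (2 * x) = saw (2 * f) := by
    rw [hx, mul_add, show (2:ℝ) * (⌊x⌋:ℝ) = ((2 * ⌊x⌋ : ℤ) : ℝ) by push_cast; ring, saw_int_add]
  have h2 : saw x = saw f := by conv_lhs => rw [hx, saw_int_add]
  have h3 : saw (x + 1/2) = saw (f + 1/2) := by
    conv_lhs => rw [hx, add_assoc, saw_int_add]
  rw [h1, h2, h3, saw_doubling_aux f (Int.fract_nonneg x) (Int.fract_lt_one x)]

lemma fract_nat_div (a q : ℕ) (hq : 0 < q) : Int.fract ((a:ℝ)/q) = ((a % q : ℕ) : ℝ)/q := by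
  have hq' : (q:ℝ) ≠ 0 := by positivity
  have h' : ((q * (a/q) + a % q : ℕ) : ℝ) = a := by exact_mod_cast congrArg Nat.cast (Nat.div_add_mod a q)
  push_cast at h'
  have : (a:ℝ)/q = ((a / q : ℕ) : ℤ) + ((a % q : ℕ):ℝ)/q := by
    rw [Int.cast_natCast]
    field_simp
    linarith
  rw [this, Int.fract_intCast_add, Int.fract_eq_self.2 ⟨by positivity, by
    rw [div_lt_one (by positivity)]; exact_mod_cast Nat.mod_lt a hq⟩]
lemma saw_nat_div_of_not_dvd {a q : ℕ} (hq : 0 < q) (h : ¬ q ∣ a) :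
    saw ((a:ℝ)/q) = ((a % q : ℕ) : ℝ)/q - 1/2 := by
  have hm : a % q ≠ 0 := fun hc => h (Nat.dvd_of_mod_eq_zero hc)
  rw [saw_of_fract_ne, fract_nat_div a q hq]
  rw [fract_nat_div a q hq]
  have : 0 < ((a % q : ℕ):ℝ) := by exact_mod_cast Nat.pos_of_ne_zero hm
  positivity

lemma saw_nat_div_of_dvd {a q : ℕ} (hq : 0 < q) (h : q ∣ a) : saw ((a:ℝ)/q) = 0 := by
  rw [saw_of_fract_eq]
  rw [fract_nat_div a q hq, Nat.mod_eq_zero_of_dvd h]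
  simp

lemma sum_range_two_mul (r : ℕ) (f : ℕ → ℝ) :
    ∑ m ∈ Finset.range (2*r), f m = ∑ j ∈ Finset.range r, (f j + f (j+r)) := by
  rw [two_mul, Finset.sum_range_add, ← Finset.sum_add_distrib]
  exact Finset.sum_congr rfl (fun j _ => by rw [add_comm j r])

lemma saw_half : saw (1/2 : ℝ) = 0 := by
  rw [saw_of_fract_ne (by rw [Int.fract_eq_self.2 ⟨by norm_num, by norm_num⟩]; norm_num),
    Int.fract_eq_self.2 ⟨by norm_num, by norm_num⟩]
  norm_num

lemma saw_zero : saw (0:ℝ) = 0 := saw_of_fract_eq (by simp)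

/-- simple fract values -/
lemma saw_val {m q : ℕ} (h1 : 0 < m) (h2 : m < q) : saw ((m:ℝ)/q) = (m:ℝ)/q - 1/2 := by
  have hq : (0:ℝ) < q := by exact_mod_cast h1.trans h2
  have hm : (0:ℝ) < m := by exact_mod_cast h1
  have hlt : (m:ℝ)/q < 1 := by rw [div_lt_one hq]; exact_mod_cast h2
  rw [saw_of_fract_ne (by rw [Int.fract_eq_self.2 ⟨by positivity, hlt⟩]; positivity),
    Int.fract_eq_self.2 ⟨by positivity, hlt⟩]

/-- s(2p, 2r) = s(p, r) for any p, r ≥ 1 -/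
lemma dedekind_double_double (p r : ℕ) (hr : 0 < r) :
    dedekindSum (2*p) (2*r) = dedekindSum p r := by
  unfold dedekindSum
  rw [sum_range_two_mul]
  apply Finset.sum_congr rfl
  intro j hj
  rw [Finset.mem_range] at hj
  have hr' : (r:ℝ) ≠ 0 := by positivity
  have e1 : ((2*p : ℕ):ℝ) * (j:ℝ) / ((2*r : ℕ):ℝ) = (p:ℝ)*j/r := by push_cast; field_simp
  have e2 : ((2*p : ℕ):ℝ) * ((j+r : ℕ):ℝ) / ((2*r : ℕ):ℝ) = (p:ℝ)*j/r + (p:ℤ) := by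
    push_cast; field_simp
  have e3 : ((j+r : ℕ):ℝ) / ((2*r:ℕ):ℝ) = (j:ℝ)/(2*r) + 1/2 := by push_cast; field_simp
  push_cast only [] at *
  calc saw ((j:ℝ) / ((2*r:ℕ):ℝ)) * saw (((2*p:ℕ):ℝ) * j / ((2*r:ℕ):ℝ))
        + saw (((j+r:ℕ):ℝ) / ((2*r:ℕ):ℝ)) * saw (((2*p:ℕ):ℝ) * ((j+r:ℕ):ℝ) / ((2*r:ℕ):ℝ))
      = (saw ((j:ℝ)/(2*r)) + saw ((j:ℝ)/(2*r) + 1/2)) * saw ((p:ℝ)*j/r) := by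
        rw [e1, e2, e3, saw_add_int]
        have : (j:ℝ) / ((2*r:ℕ):ℝ) = (j:ℝ)/(2*r) := by push_cast; ring
        rw [this]; ring
    _ = saw ((j:ℝ)/r) * saw ((p:ℝ)*j/r) := by
        rw [← saw_doubling]
        congr 1
        have : (2:ℝ) * ((j:ℝ)/(2*r)) = (j:ℝ)/r := by field_simp
        rw [this]

/-- E-lemma: for p odd, ∑_{m<2r} ((pm/2r))((2m/2r)) = s(p, r). -/
lemma E_eq (p r : ℕ) (hr : 0 < r) (hop : Odd p) :
    ∑ m ∈ Finset.range (2*r), saw ((p:ℝ)*m/((2*r:ℕ):ℝ)) * saw ((2:ℝ)*m/((2*r:ℕ):ℝ))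
      = dedekindSum p r := by
  obtain ⟨t, ht⟩ := hop
  rw [sum_range_two_mul]
  unfold dedekindSum
  apply Finset.sum_congr rfl
  intro j hj
  have hr' : (r:ℝ) ≠ 0 := by positivity
  have e1 : (2:ℝ)*((j+r:ℕ):ℝ)/((2*r:ℕ):ℝ) = (2:ℝ)*j/((2*r:ℕ):ℝ) + (1:ℤ) := by
    push_cast; field_simp
  have e2 : (p:ℝ)*((j+r:ℕ):ℝ)/((2*r:ℕ):ℝ) = ((p:ℝ)*j/((2*r:ℕ):ℝ) + 1/2) + (t:ℤ) := by
    have : (p:ℝ) = 2*t+1 := by exact_mod_cast congrArg (Nat.cast : ℕ → ℝ) ht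
    push_cast
    rw [this]
    field_simp
    ring
  have e3 : (2:ℝ)*j/((2*r:ℕ):ℝ) = (j:ℝ)/r := by push_cast; field_simp
  rw [e1, e2, saw_add_int, saw_add_int, e3]
  have e4 : saw ((p:ℝ)*j/((2*r:ℕ):ℝ)) + saw ((p:ℝ)*j/((2*r:ℕ):ℝ) + 1/2)
      = saw ((p:ℝ)*j/r) := by
    rw [← saw_doubling]
    congr 1
    push_cast
    field_simp
  calc saw ((p:ℝ)*j/((2*r:ℕ):ℝ)) * saw ((j:ℝ)/r)
        + saw ((p:ℝ)*j/((2*r:ℕ):ℝ) + 1/2) * saw ((j:ℝ)/r)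
      = (saw ((p:ℝ)*j/((2*r:ℕ):ℝ)) + saw ((p:ℝ)*j/((2*r:ℕ):ℝ) + 1/2)) * saw ((j:ℝ)/r) := by ring
    _ = saw ((j:ℝ)/r) * saw ((p:ℝ)*j/r) := by rw [e4]; ring

lemma saw_one : saw (1:ℝ) = 0 := saw_of_fract_eq (by simp)

/-- T-lemma: halved sawtooth sum equals weighted full sum. -/
lemma T_eq (p r : ℕ) (hr : 0 < r) :
    ∑ m ∈ Finset.Ico 1 r, saw ((p:ℝ)*m/((2*r:ℕ):ℝ))
      = ∑ m ∈ Finset.range (2*r),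
          saw ((p:ℝ)*m/((2*r:ℕ):ℝ)) * (saw ((2:ℝ)*m/((2*r:ℕ):ℝ)) - 2 * saw ((m:ℝ)/((2*r:ℕ):ℝ))) := by
  set q := 2*r with hq
  have hq0 : 0 < q := by omega
  have hqR : (0:ℝ) < ((q:ℕ):ℝ) := by exact_mod_cast hq0
  set h : ℕ → ℝ := fun m => saw ((p:ℝ)*m/((q:ℕ):ℝ)) * (saw ((2:ℝ)*m/((q:ℕ):ℝ)) - 2 * saw ((m:ℝ)/((q:ℕ):ℝ))) with hh
  have h0 : h 0 = 0 := by
    have : (p:ℝ)*(0:ℕ)/((q:ℕ):ℝ) = 0 := by push_cast; ring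
    simp only [hh, this, saw_zero]
    ring
  have hhr : h r = 0 := by
    have hr' : (r:ℝ) ≠ 0 := by positivity
    have e1 : (2:ℝ)*(r:ℝ)/((q:ℕ):ℝ) = 1 := by rw [hq]; push_cast; field_simp
    have e2 : (r:ℝ)/((q:ℕ):ℝ) = 1/2 := by rw [hq]; push_cast; rw [div_eq_div_iff (by positivity) (by norm_num)]; ring
    simp only [hh, e1, e2, saw_one, saw_half]
    ring
  have key : ∀ m ∈ Finset.Ico 1 r, h m + h (q - m) = saw ((p:ℝ)*m/((q:ℕ):ℝ)) := by
    intro m hm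
    rw [Finset.mem_Ico] at hm
    obtain ⟨hm1, hm2⟩ := hm
    have hmq : m < q := by omega
    have hmle : m ≤ q := hmq.le
    have hcast : ((q - m : ℕ):ℝ) = ((q:ℕ):ℝ) - (m:ℝ) := by push_cast [hmle]; ring
    have ha : saw ((m:ℝ)/((q:ℕ):ℝ)) = (m:ℝ)/((q:ℕ):ℝ) - 1/2 := saw_val hm1 hmq
    have hb : saw ((2:ℝ)*m/((q:ℕ):ℝ)) = 2*(m:ℝ)/((q:ℕ):ℝ) - 1/2 := by
      have h2m := saw_val (m := 2*m) (q := q) (by omega) (by omega)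
      push_cast at h2m
      convert h2m using 3 <;> push_cast <;> ring
    have hc : saw (((q-m:ℕ):ℝ)/((q:ℕ):ℝ)) = -saw ((m:ℝ)/((q:ℕ):ℝ)) := by
      have e : ((q-m:ℕ):ℝ)/((q:ℕ):ℝ) = -((m:ℝ)/((q:ℕ):ℝ)) + ((1:ℤ):ℝ) := by
        rw [hcast]; push_cast; field_simp; ring
      rw [e, saw_add_int, saw_neg]
    have hd : saw ((2:ℝ)*((q-m:ℕ):ℝ)/((q:ℕ):ℝ)) = -saw ((2:ℝ)*m/((q:ℕ):ℝ)) := by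
      have e : (2:ℝ)*((q-m:ℕ):ℝ)/((q:ℕ):ℝ) = -((2:ℝ)*m/((q:ℕ):ℝ)) + ((2:ℤ):ℝ) := by
        rw [hcast]; push_cast; field_simp; ring
      rw [e, saw_add_int, saw_neg]
    have he : saw ((p:ℝ)*((q-m:ℕ):ℝ)/((q:ℕ):ℝ)) = -saw ((p:ℝ)*m/((q:ℕ):ℝ)) := by
      have e : (p:ℝ)*((q-m:ℕ):ℝ)/((q:ℕ):ℝ) = -((p:ℝ)*m/((q:ℕ):ℝ)) + ((p:ℤ):ℝ) := by
        rw [hcast]; push_cast; field_simp; ring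
      rw [e, saw_add_int, saw_neg]
    simp only [hh]
    rw [hc, hd, he, ha, hb]
    ring
  have s01 : ∑ m ∈ Finset.Ico 0 1, h m = 0 := by
    rw [Finset.sum_Ico_eq_sum_range]
    simp [h0]
  have srr : ∑ m ∈ Finset.Ico r (r+1), h m = 0 := by
    rw [Finset.sum_Ico_eq_sum_range]
    simp [hhr]
  have s4 : ∑ m ∈ Finset.Ico (r+1) q, h m = ∑ m ∈ Finset.Ico 1 r, h (q - m) := by
    apply Finset.sum_nbij' (i := fun m => q - m) (j := fun m => q - m)
    · intro a ha; rw [Finset.mem_Ico] at *; omega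
    · intro a ha; rw [Finset.mem_Ico] at *; omega
    · intro a ha; rw [Finset.mem_Ico] at ha; omega
    · intro a ha; rw [Finset.mem_Ico] at ha; omega
    · intro a ha
      rw [Finset.mem_Ico] at ha
      congr 1
      omega
  rw [Finset.range_eq_Ico,
    ← Finset.sum_Ico_consecutive h (by omega : 0 ≤ 1) (by omega : 1 ≤ q),
    ← Finset.sum_Ico_consecutive h (by omega : 1 ≤ r) (by omega : r ≤ q),
    ← Finset.sum_Ico_consecutive h (by omega : r ≤ r+1) (by omega : r+1 ≤ q),
    s01, srr, s4, zero_add, zero_add, ← Finset.sum_add_distrib]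
  exact (Finset.sum_congr rfl key).symm

/-- Part III master: T = s(2p,q) - 2 s(p,q) for q = 2r, p odd. -/
lemma partIII (p r : ℕ) (hr : 0 < r) (hop : Odd p) :
    ∑ m ∈ Finset.Ico 1 r, saw ((p:ℝ)*m/((2*r:ℕ):ℝ))
      = dedekindSum (2*p) (2*r) - 2 * dedekindSum p (2*r) := by
  rw [T_eq p r hr]
  have expand : ∀ m : ℕ,
      saw ((p:ℝ)*m/((2*r:ℕ):ℝ)) * (saw ((2:ℝ)*m/((2*r:ℕ):ℝ)) - 2 * saw ((m:ℝ)/((2*r:ℕ):ℝ)))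
      = saw ((p:ℝ)*m/((2*r:ℕ):ℝ)) * saw ((2:ℝ)*m/((2*r:ℕ):ℝ))
        - 2 * (saw ((m:ℝ)/((2*r:ℕ):ℝ)) * saw ((p:ℝ)*m/((2*r:ℕ):ℝ))) := fun m => by ring
  rw [Finset.sum_congr rfl (fun m _ => expand m), Finset.sum_sub_distrib, ← Finset.mul_sum]
  rw [E_eq p r hr hop, dedekind_double_double p r hr]
  rfl

section Comb

variable {p q : ℕ} (hp : 3 ≤ p) (hop : Odd p) (hq : 2 < q) (hqe : Even q) (hpq : Nat.Coprime p q)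

private def Sset (p q : ℕ) : Finset (ℕ × ℕ) := (Finset.Icc 1 (p - 1)) ×ˢ (Finset.Icc 1 (q - 1))

private noncomputable def fv (p q : ℕ) (kl : ℕ × ℕ) : ℝ := (kl.1 : ℝ) / p + (kl.2 : ℝ) / q

include hp hq hpq in
lemma fv_injOn : Set.InjOn (fv p q) ↑(Sset p q) := by
  intro a ha b hb hab
  simp only [Sset, Finset.coe_product, Set.mem_prod, Finset.mem_coe, Finset.mem_Icc] at ha hb
  have hp0 : (0:ℝ) < p := by exact_mod_cast (by omega : 0 < p)
  have hq0 : (0:ℝ) < q := by exact_mod_cast (by omega : 0 < q)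
  have key : (a.1 : ℝ) * q + a.2 * p = b.1 * q + b.2 * p := by
    unfold fv at hab
    field_simp at hab
    linarith
  have keyZ : (a.1 : ℤ) * q + a.2 * p = b.1 * q + b.2 * p := by exact_mod_cast key
  have hdvd : (p:ℤ) ∣ ((a.1 : ℤ) - b.1) * q := by
    exact ⟨(b.2 : ℤ) - a.2, by linarith⟩
  have hcop : IsCoprime (p:ℤ) (q:ℤ) := hpq.isCoprime
  have hdvd2 : (p:ℤ) ∣ ((a.1 : ℤ) - b.1) := (IsCoprime.dvd_of_dvd_mul_right hcop) hdvd
  have h1 : a.1 = b.1 := by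
    have habs := Int.eq_zero_of_abs_lt_dvd hdvd2 (by
      have h1 := ha.1.1; have h2 := ha.1.2; have h3 := hb.1.1; have h4 := hb.1.2
      have e1 : (a.1:ℤ) < p := by exact_mod_cast (by omega : a.1 < p)
      have e2 : (b.1:ℤ) < p := by exact_mod_cast (by omega : b.1 < p)
      have e3 : (1:ℤ) ≤ a.1 := by exact_mod_cast h1
      have e4 : (1:ℤ) ≤ b.1 := by exact_mod_cast h3
      rw [abs_lt]
      omega)
    omega
  have h2 : a.2 = b.2 := by
    have : (a.2 : ℤ) * p = b.2 * p := by rw [h1] at keyZ; linarith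
    have hpne : (p:ℤ) ≠ 0 := by exact_mod_cast (by omega : p ≠ 0)
    have := mul_right_cancel₀ hpne this
    exact_mod_cast this
  exact Prod.ext h1 h2

include hp hq hop hpq in
lemma fv_ne_half_mul : ∀ kl ∈ Sset p q, ∀ c : ℕ, fv p q kl ≠ (c : ℝ) / 2 := by
  intro kl hkl c habs
  simp only [Sset, Finset.mem_product, Finset.mem_Icc] at hkl
  have hp0 : (0:ℝ) < p := by exact_mod_cast (by omega : 0 < p)
  have hq0 : (0:ℝ) < q := by exact_mod_cast (by omega : 0 < q)
  have key : (2:ℝ) * ((kl.1:ℝ) * q + kl.2 * p) = c * (p * q) := by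
    unfold fv at habs
    field_simp at habs
    linarith
  have keyZ : (2:ℤ) * ((kl.1:ℤ) * q + kl.2 * p) = c * (p * q) := by exact_mod_cast key
  have hdvd : (p:ℤ) ∣ (kl.1:ℤ) * (2 * q) := ⟨(c:ℤ) * q - 2 * kl.2, by linear_combination keyZ⟩
  have hcopN : Nat.Coprime p (2 * q) := Nat.Coprime.mul_right (hop.coprime_two_left).symm hpq
  have hdvd2 : (p:ℤ) ∣ (kl.1:ℤ) := (IsCoprime.dvd_of_dvd_mul_right (by
    have := hcopN.isCoprime
    push_cast at this
    exact this)) hdvd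
  have hdvdN : p ∣ kl.1 := by exact_mod_cast hdvd2
  have := Nat.le_of_dvd (by omega) hdvdN
  omega

include hp hq hop hpq in
lemma fv_ne_half : ∀ kl ∈ Sset p q, fv p q kl ≠ 1/2 :=
  fun kl hkl => by simpa using fv_ne_half_mul hp hop hq hpq kl hkl 1

include hp hq hop hpq in
lemma fv_ne_three_half : ∀ kl ∈ Sset p q, fv p q kl ≠ 3/2 :=
  fun kl hkl => by simpa using fv_ne_half_mul hp hop hq hpq kl hkl 3

include hp hq hpq in
lemma card_filter_sigma (P : ℝ → Prop) (inst : DecidablePred P) :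
    (@Finset.filter ℝ P inst (sigmaSet p q)).card = ((Sset p q).filter (fun kl => P (fv p q kl))).card := by
  have h0 : @Finset.filter ℝ P inst (sigmaSet p q) = Finset.filter P (sigmaSet p q) := by congr!
  rw [h0]
  have : (sigmaSet p q).filter P = ((Sset p q).filter (fun kl => P (fv p q kl))).image (fv p q) := by
    rw [sigmaSet, Finset.filter_image]
    rfl
  rw [this, Finset.card_image_of_injOn ((fv_injOn hp hq hpq).mono (by
    intro x hx
    simp only [Finset.coe_filter, Set.mem_setOf_eq] at hx
    exact hx.1))]

lemma card_Sset : (Sset p q).card = (p-1) * (q-1) := by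
  rw [Sset, Finset.card_product, Nat.card_Icc, Nat.card_Icc]
  congr 1 <;> omega

include hp hq hop hpq in
lemma sigHat_eq :
    sigHat p q (1/2)
      = 4 * (((Sset p q).filter (fun kl => fv p q kl < 1/2)).card : ℤ) - ((p-1) * (q-1) : ℕ) := by
  classical
  set A := (Sset p q).filter (fun kl => fv p q kl < 1/2) with hA
  set B := (Sset p q).filter (fun kl => 3/2 < fv p q kl) with hB
  set I := (Sset p q).filter (fun kl => fv p q kl ∈ Set.Ioo (1/2 : ℝ) (1/2 + 1)) with hI
  have hsplit : ((Sset p q).filter (fun kl => fv p q kl ∉ Set.Ioo (1/2 : ℝ) (1/2 + 1))).card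
      = A.card + B.card := by
    have heq : (Sset p q).filter (fun kl => fv p q kl ∉ Set.Ioo (1/2 : ℝ) (1/2 + 1))
        = A ∪ B := by
      rw [hA, hB, ← Finset.filter_or]
      apply Finset.filter_congr
      intro kl hkl
      have h1 := fv_ne_half hp hop hq hpq kl hkl
      have h2 := fv_ne_three_half hp hop hq hpq kl hkl
      simp only [Set.mem_Ioo, not_and, not_lt]
      constructor
      · intro h
        rcases lt_or_ge (fv p q kl) (1/2) with h' | h'
        · exact Or.inl h'
        · have : fv p q kl > 1/2 := lt_of_le_of_ne h' (Ne.symm h1)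
          have := h this
          norm_num at this ⊢
          exact Or.inr (lt_of_le_of_ne this (by simpa using h2.symm))
      · intro h h'
        norm_num
        rcases h with h | h
        · exact absurd h' (not_lt.2 h.le)
        · linarith
    rw [heq, Finset.card_union_of_disjoint]
    rw [hA, hB, Finset.disjoint_filter]
    intro kl hkl h1 h2
    linarith
  have hI' : I.card + (A.card + B.card) = (Sset p q).card := by
    rw [← hsplit, hI]
    exact Finset.card_filter_add_card_filter_not _
  have hBA : B.card = A.card := by
    rw [hA, hB]
    apply Finset.card_nbij' (i := fun kl => (p - kl.1, q - kl.2)) (j := fun kl => (p - kl.1, q - kl.2))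
    · intro a ha
      simp only [Finset.mem_coe, Finset.mem_filter, Sset, Finset.mem_product, Finset.mem_Icc] at ha ⊢
      obtain ⟨⟨⟨h1, h2⟩, h3, h4⟩, h5⟩ := ha
      refine ⟨⟨⟨by omega, by omega⟩, by omega, by omega⟩, ?_⟩
      have hp0 : (0:ℝ) < p := by exact_mod_cast (by omega : 0 < p)
      have hq0 : (0:ℝ) < q := by exact_mod_cast (by omega : 0 < q)
      have e : fv p q (p - a.1, q - a.2) = 2 - fv p q a := by
        unfold fv
        have c1 : ((p - a.1 : ℕ):ℝ) = (p:ℝ) - a.1 := by rw [Nat.cast_sub (by omega : a.1 ≤ p)]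
        have c2 : ((q - a.2 : ℕ):ℝ) = (q:ℝ) - a.2 := by rw [Nat.cast_sub (by omega : a.2 ≤ q)]
        rw [c1, c2]
        field_simp
        ring
      rw [e]
      linarith
    · intro a ha
      simp only [Finset.mem_coe, Finset.mem_filter, Sset, Finset.mem_product, Finset.mem_Icc] at ha ⊢
      obtain ⟨⟨⟨h1, h2⟩, h3, h4⟩, h5⟩ := ha
      refine ⟨⟨⟨by omega, by omega⟩, by omega, by omega⟩, ?_⟩
      have hp0 : (0:ℝ) < p := by exact_mod_cast (by omega : 0 < p)
      have hq0 : (0:ℝ) < q := by exact_mod_cast (by omega : 0 < q)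
      have e : fv p q (p - a.1, q - a.2) = 2 - fv p q a := by
        unfold fv
        have c1 : ((p - a.1 : ℕ):ℝ) = (p:ℝ) - a.1 := by rw [Nat.cast_sub (by omega : a.1 ≤ p)]
        have c2 : ((q - a.2 : ℕ):ℝ) = (q:ℝ) - a.2 := by rw [Nat.cast_sub (by omega : a.2 ≤ q)]
        rw [c1, c2]
        field_simp
        ring
      rw [e]
      linarith
    · intro a ha
      simp only [Finset.mem_coe, Finset.mem_filter, Sset, Finset.mem_product, Finset.mem_Icc] at ha
      obtain ⟨⟨⟨h1, h2⟩, h3, h4⟩, h5⟩ := ha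
      ext <;> simp <;> omega
    · intro a ha
      simp only [Finset.mem_coe, Finset.mem_filter, Sset, Finset.mem_product, Finset.mem_Icc] at ha
      obtain ⟨⟨⟨h1, h2⟩, h3, h4⟩, h5⟩ := ha
      ext <;> simp <;> omega
  have hcardS : (Sset p q).card = (p-1)*(q-1) := card_Sset
  rw [sigHat]
  rw [card_filter_sigma hp hq hpq (fun y => y ∉ Set.Ioo (1/2:ℝ) (1/2+1)) _,
    card_filter_sigma hp hq hpq (fun y => y ∈ Set.Ioo (1/2:ℝ) (1/2+1)) _]
  have e2 : (Finset.filter (fun kl => fv p q kl ∈ Set.Ioo (1/2 : ℝ) (1/2 + 1)) (Sset p q)).card = I.card := rfl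
  rw [hsplit, e2]
  omega

lemma count_k {p q r m : ℕ} (hp : 3 ≤ p) (hq : 2 < q) (hpq : Nat.Coprime p q)
    (hq2 : q = 2*r) (hm1 : 1 ≤ m) (hm2 : m < r) :
    ((Finset.Icc 1 (p-1)).filter (fun k => k*q < m*p)).card = (m*p)/q := by
  have hq0 : 0 < q := by omega
  have hndvd : ¬ q ∣ m*p := by
    intro hdvd
    have := Nat.Coprime.dvd_of_dvd_mul_right hpq.symm hdvd
    have := Nat.le_of_dvd (by omega) this
    omega
  have hub : (m*p)/q ≤ p-1 := by
    have : (m*p)/q < p := by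
      rw [Nat.div_lt_iff_lt_mul hq0]
      have : m < q := by omega
      calc m*p < q*p := by
            apply Nat.mul_lt_mul_right (by omega : 0 < p) |>.mpr this
        _ = p*q := by ring
    omega
  have hfe : (Finset.Icc 1 (p-1)).filter (fun k => k*q < m*p) = Finset.Icc 1 ((m*p)/q) := by
    ext k
    simp only [Finset.mem_filter, Finset.mem_Icc]
    constructor
    · rintro ⟨⟨h1, h2⟩, h3⟩
      refine ⟨h1, ?_⟩
      rw [Nat.le_div_iff_mul_le hq0]
      omega
    · rintro ⟨h1, h2⟩
      have h3 : k*q ≤ m*p := by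
        rw [← Nat.le_div_iff_mul_le hq0]
        exact h2
      have h4 : k*q ≠ m*p := by
        intro habs
        exact hndvd ⟨k, by rw [← habs]; ring⟩
      exact ⟨⟨h1, by omega⟩, by omega⟩
  rw [hfe, Nat.card_Icc]
  simp

lemma A_eq {p q r : ℕ} (hp : 3 ≤ p) (hq : 2 < q) (hpq : Nat.Coprime p q) (hq2 : q = 2*r) :
    ((Sset p q).filter (fun kl => fv p q kl < 1/2)).card = ∑ m ∈ Finset.Ico 1 r, (m*p)/q := by
  have hq0 : 0 < q := by omega
  have hr2 : 2 ≤ r := by omega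
  have hp0 : (0:ℝ) < p := by exact_mod_cast (by omega : 0 < p)
  have hq0' : (0:ℝ) < q := by exact_mod_cast hq0
  rw [Finset.card_filter, Sset, Finset.sum_product_right]
  have inner : ∀ l ∈ Finset.Icc 1 (q-1),
      (∑ k ∈ Finset.Icc 1 (p-1), if fv p q (k, l) < 1/2 then 1 else 0)
        = if l < r then ((r-l)*p)/q else 0 := by
    intro l hl
    rw [Finset.mem_Icc] at hl
    rw [← Finset.card_filter]
    split_ifs with hlr
    · have hcond : ∀ k ∈ Finset.Icc 1 (p-1), (fv p q (k, l) < 1/2 ↔ k*q < (r-l)*p) := by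
        intro k hk
        rw [Finset.mem_Icc] at hk
        have kreal : fv p q (k, l) < 1/2 ↔ ((k:ℝ)*q + l*p)*2 < p*q*1 := by
          unfold fv
          rw [div_add_div _ _ (ne_of_gt hp0) (ne_of_gt hq0'),
            div_lt_div_iff₀ (by positivity) (by norm_num : (0:ℝ) < 2)]
          ring_nf
        have knat : fv p q (k, l) < 1/2 ↔ (k*q + l*p)*2 < p*q*1 := by
          rw [kreal]
          exact_mod_cast Iff.rfl
        rw [knat]
        have hle' : l*p ≤ r*p := Nat.mul_le_mul_right p (by omega)
        have hrp : r*p = l*p + (r-l)*p := by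
          rw [Nat.sub_mul]
          omega
        have hpq2 : p*q = 2*(r*p) := by rw [hq2]; ring
        omega
      rw [Finset.filter_congr hcond]
      exact count_k hp hq hpq hq2 (by omega) (by omega)
    · rw [Finset.card_eq_zero.2 (Finset.filter_false_of_mem ?_)]
      intro k hk
      rw [Finset.mem_Icc] at hk
      intro habs
      have h1 : (1:ℝ) ≤ (k:ℝ)/p * p := by
        rw [div_mul_cancel₀]
        · exact_mod_cast hk.1
        · exact ne_of_gt hp0
      have hk0 : (0:ℝ) < (k:ℝ)/p := by
        apply div_pos _ hp0
        exact_mod_cast (by omega : 0 < k)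
      have hl2 : (1:ℝ)/2 ≤ (l:ℝ)/q := by
        rw [div_le_div_iff₀ (by norm_num) hq0']
        have : r ≤ l := by omega
        have : (r:ℝ) ≤ l := by exact_mod_cast this
        have hqr : (q:ℝ) = 2*r := by exact_mod_cast hq2
        linarith
      unfold fv at habs
      simp only at habs
      linarith
  rw [Finset.sum_congr rfl inner]
  have hsub : Finset.Ico 1 r ⊆ Finset.Icc 1 (q-1) := by
    intro l hl
    rw [Finset.mem_Ico] at hl
    rw [Finset.mem_Icc]
    omega
  have step1 : ∑ l ∈ Finset.Icc 1 (q-1), (if l < r then ((r-l)*p)/q else 0)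
      = ∑ l ∈ Finset.Ico 1 r, (if l < r then ((r-l)*p)/q else 0) := by
    refine (Finset.sum_subset hsub ?_).symm
    intro l hl hnl
    rw [Finset.mem_Icc] at hl
    rw [Finset.mem_Ico] at hnl
    rw [if_neg (by omega)]
  have step2 : ∑ l ∈ Finset.Ico 1 r, (if l < r then ((r-l)*p)/q else 0)
      = ∑ l ∈ Finset.Ico 1 r, ((r-l)*p)/q := by
    refine Finset.sum_congr rfl ?_
    intro l hl
    rw [Finset.mem_Ico] at hl
    rw [if_pos (by omega)]
  rw [step1, step2]
  apply Finset.sum_nbij' (i := fun l => r - l) (j := fun m => r - m)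
  · intro a ha; rw [Finset.mem_Ico] at *; omega
  · intro a ha; rw [Finset.mem_Ico] at *; omega
  · intro a ha; rw [Finset.mem_Ico] at ha; omega
  · intro a ha; rw [Finset.mem_Ico] at ha; omega
  · intro a ha; rfl


theorem sigma_ord_odd_even (p q : ℕ) (hp : 3 ≤ p) (hop : Odd p)
    (hq : 2 < q) (hqe : Even q) (hpq : Nat.Coprime p q) :
    (sigHat p q (1/2) : ℝ) =
      -(p * q)/2 + 1 - 4 * dedekindSum (2 * p) q + 8 * dedekindSum p q := by
  obtain ⟨r, hr2⟩ := hqe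
  have hq2 : q = 2*r := by omega
  have hr : 0 < r := by omega
  have hrR : (0:ℝ) < r := by exact_mod_cast hr
  have hpR : (0:ℝ) < p := by exact_mod_cast (by omega : 0 < p)
  have hqR : (0:ℝ) < q := by exact_mod_cast (by omega : 0 < q)
  have hq2R : ((q:ℕ):ℝ) = 2*(r:ℝ) := by exact_mod_cast congrArg (Nat.cast : ℕ → ℝ) hq2
  -- Part III
  have h3 := partIII p r hr hop
  rw [← hq2] at h3
  -- term-wise cast of the floor sum
  have hterm : ∀ m ∈ Finset.Ico 1 r, (((m*p)/q : ℕ):ℝ)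
      = (p:ℝ)*m/((q:ℕ):ℝ) - saw ((p:ℝ)*m/((q:ℕ):ℝ)) - 1/2 := by
    intro m hm
    rw [Finset.mem_Ico] at hm
    have hndvd : ¬ q ∣ m*p := by
      intro hdvd
      have := Nat.Coprime.dvd_of_dvd_mul_right hpq.symm hdvd
      have := Nat.le_of_dvd (by omega) this
      omega
    have hcast : ((m*p : ℕ):ℝ) = (p:ℝ)*m := by push_cast; ring
    have hsaw := saw_nat_div_of_not_dvd (a := m*p) (q := q) (by omega) hndvd
    have hdm := Nat.div_add_mod (m*p) q
    have hdmR : (q:ℝ) * (((m*p)/q : ℕ):ℝ) + ((m*p % q : ℕ):ℝ) = (p:ℝ)*m := by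
      rw [← hcast]
      exact_mod_cast congrArg (Nat.cast : ℕ → ℝ) hdm
    rw [show (p:ℝ)*m/((q:ℕ):ℝ) = ((m*p:ℕ):ℝ)/((q:ℕ):ℝ) by rw [hcast]]
    have hqne : ((q:ℕ):ℝ) ≠ 0 := ne_of_gt hqR
    rw [hsaw, show ((m*p:ℕ):ℝ)/((q:ℕ):ℝ) - (((m*p % q : ℕ):ℝ)/((q:ℕ):ℝ) - 1/2) - 1/2
        = (((m*p:ℕ):ℝ) - ((m*p % q:ℕ):ℝ))/((q:ℕ):ℝ) from by ring, eq_div_iff hqne]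
    linarith [hdmR, hcast]
  -- Parts I and II
  set N : ℕ := ∑ m ∈ Finset.Ico 1 r, (m*p)/q with hN
  have h1 := sigHat_eq hp hop hq hpq
  rw [A_eq hp hq hpq hq2, ← hN] at h1
  have h1R : (sigHat p q (1/2) : ℝ) = 4*(N:ℝ) - ((p:ℝ)-1)*((q:ℝ)-1) := by
    have hc : ((sigHat p q (1/2) : ℤ) : ℝ) = ((4 * (N:ℤ) - ((p-1)*(q-1) : ℕ) : ℤ) : ℝ) :=
      congrArg (fun z : ℤ => (z:ℝ)) h1
    rw [hc]
    push_cast [Nat.cast_sub (by omega : 1 ≤ p), Nat.cast_sub (by omega : 1 ≤ q)]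
    ring
  have hNR : (N:ℝ) = ∑ m ∈ Finset.Ico 1 r, ((p:ℝ)*m/((q:ℕ):ℝ) - saw ((p:ℝ)*m/((q:ℕ):ℝ)) - 1/2) := by
    rw [hN, Nat.cast_sum]
    exact Finset.sum_congr rfl hterm
  rw [h1R, hNR]
  -- split the sum
  set G : ℝ := ∑ m ∈ Finset.Ico 1 r, (m:ℝ) with hGdef
  set TT : ℝ := ∑ m ∈ Finset.Ico 1 r, saw ((p:ℝ)*m/((q:ℕ):ℝ)) with hTTdef
  have hsplit : ∑ m ∈ Finset.Ico 1 r, ((p:ℝ)*m/((q:ℕ):ℝ) - saw ((p:ℝ)*m/((q:ℕ):ℝ)) - 1/2)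
      = (p:ℝ)/q * G - TT - ((r:ℝ)-1)/2 := by
    rw [Finset.sum_sub_distrib, Finset.sum_sub_distrib, hGdef, hTTdef, Finset.mul_sum]
    congr 1
    · congr 1
      apply Finset.sum_congr rfl
      intro m hm
      ring
    · rw [Finset.sum_const, Nat.card_Ico, nsmul_eq_mul]
      have : ((r - 1 : ℕ):ℝ) = (r:ℝ) - 1 := by
        push_cast [Nat.cast_sub (by omega : 1 ≤ r)]
        ring
      rw [this]
      ring
  rw [hsplit]
  -- Gauss sum
  have hG : 2*G = (r:ℝ)*((r:ℝ)-1) := by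
    have hNat := Finset.sum_range_id_mul_two r
    have hIco : ∑ m ∈ Finset.Ico 1 r, m = ∑ i ∈ Finset.range r, i := by
      rw [Finset.range_eq_Ico, ← Finset.sum_Ico_consecutive _ (by omega : 0 ≤ 1) (by omega : 1 ≤ r)]
      simp
    have hGN : G = ((∑ m ∈ Finset.Ico 1 r, m : ℕ):ℝ) := by
      rw [hGdef, Nat.cast_sum]
    rw [hGN, hIco]
    have : (((∑ i ∈ Finset.range r, i) * 2 : ℕ):ℝ) = ((r * (r-1) : ℕ):ℝ) :=
      congrArg (Nat.cast : ℕ → ℝ) hNat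
    push_cast [Nat.cast_sub (by omega : 1 ≤ r)] at this
    push_cast
    linarith
  -- finish
  have hGval : G = (r:ℝ)*((r:ℝ)-1)/2 := by linarith
  rw [h3, hq2R, hGval]
  field_simp
  ring
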